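/- arXiv:1807.02058 — 7 statements merged into one kernel-verified Lean document; each statement's English description precedes it below -/
import Mathlib

section
/- Let N be a type with a distinguished element 1, a binary operation mul : N → N → N and a unary operation inv : N → N; let E be a type; and let dil, dil' : N → E → E → E be maps, each injective as a map from N to functions E → E → E (i.e., if dil a = dil b as binary operations then a = b, and likewise for dil'). Assume for all a, b ∈ N and e, x ∈ E: (id) dil 1 e x = x and dil' 1 e x = x; (in) dil (inv a) = dil' a and dil' (inv a) = dil a; (act) dil a e (dil b e x) = dil (mul a b) e x; (R2) dil a e (dil' a e x) = x; (C) mul a b = mul b a. Then N is a commutative group with multiplication mul, neutral element 1 and inverse inv; in particular: inv (inv a) = a, inv 1 = 1, mul a (inv a) = 1 = mul (inv a) a, mul a 1 = a = mul 1 a, and mul is associative. -/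
theorem stmt_2 (N E : Type*) (one : N) (mul : N → N → N) (inv : N → N)
    (dil dil' : N → E → E → E)
    (hext : ∀ a b : N, dil a = dil b → a = b)
    (hext' : ∀ a b : N, dil' a = dil' b → a = b)
    (hid : ∀ e x : E, dil one e x = x)
    (hid' : ∀ e x : E, dil' one e x = x)
    (hin : ∀ a : N, dil (inv a) = dil' a)
    (hin' : ∀ a : N, dil' (inv a) = dil a)
    (hact : ∀ (a b : N) (e x : E), dil a e (dil b e x) = dil (mul a b) e x)
    (hR2 : ∀ (a : N) (e x : E), dil a e (dil' a e x) = x)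
    (hC : ∀ a b : N, mul a b = mul b a) :
    (∀ a : N, inv (inv a) = a) ∧
    inv one = one ∧
    (∀ a : N, mul a (inv a) = one ∧ mul (inv a) a = one) ∧
    (∀ a : N, mul a one = a ∧ mul one a = a) ∧
    (∀ a b c : N, mul (mul a b) c = mul a (mul b c)) := by
  have hinv : ∀ a, inv (inv a) = a := fun a =>
    hext _ _ (by rw [hin, hin'])
  have hinvone : inv one = one := by
    apply hext
    rw [hin]
    funext e x
    rw [hid, hid']
  have hright : ∀ a, mul a (inv a) = one := fun a => by
    apply hext
    funext e x
    rw [← hact, hin, hR2, hid]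
  have hone : ∀ a, mul a one = a := fun a => by
    apply hext
    funext e x
    rw [← hact, hid]
  refine ⟨hinv, hinvone, fun a => ⟨hright a, (hC _ _).trans (hright a)⟩,
    fun a => ⟨hone a, (hC _ _).trans (hone a)⟩, fun a b c => ?_⟩
  apply hext
  funext e x
  rw [← hact, ← hact, hact b, hact a]
end

section
/- Let N be a commutative monoid (written multiplicatively, with neutral element 1), inv : N → N a map with inv (inv a) = a for all a, E a type, and dil : N → E → E → E a map satisfying, for all a, b ∈ N and e, x ∈ E: (id) dil 1 e x = x; (act) dil a e (dil b e x) = dil (a*b) e x; (R1) dil a x x = x. For a ∈ N and B : E → E → E define (a − B) e x := B (dil a e x) (dil (inv a) (dil a e x) e). Then the following are equivalent: (R2) for all a ∈ N and e, x ∈ E, dil (inv a) e (dil a e x) = x; and (aab) for every a ∈ N, every B : E → E → E, and all e, x ∈ E, (a − (a − B)) e x = B e x. -/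
/-- Difference combinator with an abstract inversion map:
`(a − B) e x := B (dil a e x) (dil (inv a) (dil a e x) e)`. -/
def emDiffInv {N E : Type*} (dil : N → E → E → E) (inv : N → N) (a : N)
    (B : E → E → E) : E → E → E :=
  fun e x => B (dil a e x) (dil (inv a) (dil a e x) e)

theorem stmt_8 (N E : Type*) [CommMonoid N] (inv : N → N)
    (hinv : ∀ a : N, inv (inv a) = a)
    (dil : N → E → E → E)
    (hid : ∀ e x : E, dil 1 e x = x)
    (hact : ∀ (a b : N) (e x : E), dil a e (dil b e x) = dil (a * b) e x)
    (hR1 : ∀ (a : N) (x : E), dil a x x = x) :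
    (∀ (a : N) (e x : E), dil (inv a) e (dil a e x) = x) ↔
    (∀ (a : N) (B : E → E → E) (e x : E),
      emDiffInv dil inv a (emDiffInv dil inv a B) e x = B e x) := by
  constructor
  · intro hR2 a B e x
    have h2 : ∀ (a : N) (e y : E), dil a e (dil (inv a) e y) = y := by
      intro a e y
      have := hR2 (inv a) e y
      rwa [hinv] at this
    simp only [emDiffInv]
    rw [h2 a (dil a e x) e, hR2 a e x]
  · intro h a e x
    have hP := h a (fun u _ => u) e x
    have hQ := h a (fun _ v => v) e x
    simp only [emDiffInv] at hP hQ
    rw [hP] at hQ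
    exact hQ
end

section
/- Let N be a commutative group and E a type, and let dil : N → E → E → E be a dilation structure. Then the approximate difference can be computed from the approximate sum and the approximate inverse: for all a ∈ N and e, x, y ∈ E, Σ a (dil a e x) (ι a e x) y = Δ a e x y. -/
/-- Approximate sum: `Σ a e x y := dil a⁻¹ e (dil a (dil a e x) y)`. -/
def emAsum {N E : Type*} [CommGroup N] (dil : N → E → E → E) (a : N)
    (e x y : E) : E :=
  dil a⁻¹ e (dil a (dil a e x) y)

/-- Approximate difference: `Δ a e x y := dil a⁻¹ (dil a e x) (dil a e y)`. -/
def emAdif {N E : Type*} [CommGroup N] (dil : N → E → E → E) (a : N)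
    (e x y : E) : E :=
  dil a⁻¹ (dil a e x) (dil a e y)

/-- Approximate inverse: `ι a e x := dil a⁻¹ (dil a e x) e`. -/
def emAinv {N E : Type*} [CommGroup N] (dil : N → E → E → E) (a : N)
    (e x : E) : E :=
  dil a⁻¹ (dil a e x) e

theorem dil_dil_inv {N E : Type*} [Group N] (dil : N → E → E → E)
    (hid : ∀ e x : E, dil 1 e x = x)
    (hact : ∀ (a b : N) (e x : E), dil a e (dil b e x) = dil (a * b) e x)
    (a : N) (e x : E) : dil a e (dil a⁻¹ e x) = x := by
  rw [hact, mul_inv_cancel, hid]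

theorem stmt_10_general (N E : Type*) [CommGroup N] (dil : N → E → E → E)
    (hid : ∀ e x : E, dil 1 e x = x)
    (hact : ∀ (a b : N) (e x : E), dil a e (dil b e x) = dil (a * b) e x) :
    ∀ (a : N) (e x y : E),
      emAsum dil a (dil a e x) (emAinv dil a e x) y = emAdif dil a e x y := by
  intro a e x y
  rw [emAsum, emAinv, dil_dil_inv dil hid hact, emAdif]

theorem stmt_10 (N E : Type*) [CommGroup N] (dil : N → E → E → E)
    (hid : ∀ e x : E, dil 1 e x = x)
    (hact : ∀ (a b : N) (e x : E), dil a e (dil b e x) = dil (a * b) e x)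
    (hR1 : ∀ (a : N) (x : E), dil a x x = x) :
    ∀ (a : N) (e x y : E),
      emAsum dil a (dil a e x) (emAinv dil a e x) y = emAdif dil a e x y :=
  stmt_10_general N E dil hid hact
end

section
/- Let N be a commutative group and E a type, and let dil : N → E → E → E be a dilation structure. Then the approximate sum is approximately associative: for all a ∈ N and e, x, y, z ∈ E, Σ a e (Σ a e x y) z = Σ a e x (Σ a (dil a e x) y z). -/
theorem stmt_11 (N E : Type*) [CommGroup N] (dil : N → E → E → E)
    (hid : ∀ e x : E, dil 1 e x = x)
    (hact : ∀ (a b : N) (e x : E), dil a e (dil b e x) = dil (a * b) e x)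
    (hR1 : ∀ (a : N) (x : E), dil a x x = x) :
    ∀ (a : N) (e x y z : E),
      emAsum dil a e (emAsum dil a e x y) z =
        emAsum dil a e x (emAsum dil a (dil a e x) y z) := by
  intro a e x y z
  simp [emAsum, hact, hid]
end

section
/- Let N be a commutative group and E a type, and let dil : N → E → E → E be a dilation structure. Then the approximate sum is approximately distributive with respect to dilations: for all a, b ∈ N and e, x, y ∈ E, dil b e (Σ (a*b) e x y) = Σ a e (dil b e x) (dil b (dil (a*b) e x) y). -/
theorem stmt_14 (N E : Type*) [CommGroup N] (dil : N → E → E → E)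
    (hid : ∀ e x : E, dil 1 e x = x)
    (hact : ∀ (a b : N) (e x : E), dil a e (dil b e x) = dil (a * b) e x)
    (hR1 : ∀ (a : N) (x : E), dil a x x = x) :
    ∀ (a b : N) (e x y : E),
      dil b e (emAsum dil (a * b) e x y) =
        emAsum dil a e (dil b e x) (dil b (dil (a * b) e x) y) := by
  intro a b e x y
  simp only [emAsum, hact]
  congr 1
  · group
end

section
/- Let N be a commutative group and E a type, and let dil : N → E → E → E be a dilation structure. Then for all a, c ∈ N and every B : E → E → E: (a − B)·(dil c) = (a*c) − (B·(dil c)) as binary operations on E, i.e., for all e, x ∈ E, (a − B) e (dil c e x) = (B·(dil c)) (dil (a*c) e x) (dil (a*c)⁻¹ (dil (a*c) e x) e). -/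
/-- Difference combinator: `(a − B) e x := B (dil a e x) (dil a⁻¹ (dil a e x) e)`. -/
def emDiff {N E : Type*} [CommGroup N] (dil : N → E → E → E) (a : N)
    (B : E → E → E) : E → E → E :=
  fun e x => B (dil a e x) (dil a⁻¹ (dil a e x) e)

/-- Product of binary operations: `(B·C) e x := B e (C e x)`. -/
def emProd {E : Type*} (B C : E → E → E) : E → E → E :=
  fun e x => B e (C e x)

section

variable {N E : Type*} [CommGroup N] {dil : N → E → E → E}

/- Both sides evaluate `B` at `dil (a * c) e x`; in the second argument the action law at the
base point `dil (a * c) e x` merges `dil c` and `dil (a * c)⁻¹` into `dil a⁻¹`. -/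
theorem emDiff_apply_dil
    (hact : ∀ (a b : N) (e x : E), dil a e (dil b e x) = dil (a * b) e x)
    (a c : N) (B : E → E → E) (e x : E) :
    emDiff dil a B e (dil c e x) =
      emProd B (dil c) (dil (a * c) e x) (dil (a * c)⁻¹ (dil (a * c) e x) e) := by
  have hinv : c * (a * c)⁻¹ = a⁻¹ := by group
  simp only [emDiff, emProd, hact, hinv]

theorem emProd_emDiff_dil
    (hact : ∀ (a b : N) (e x : E), dil a e (dil b e x) = dil (a * b) e x)
    (a c : N) (B : E → E → E) :
    emProd (emDiff dil a B) (dil c) = emDiff dil (a * c) (emProd B (dil c)) :=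
  funext₂ (emDiff_apply_dil hact a c B)

end

theorem stmt_18_general (N E : Type*) [CommGroup N] (dil : N → E → E → E)
    (hact : ∀ (a b : N) (e x : E), dil a e (dil b e x) = dil (a * b) e x) :
    ∀ (a c : N) (B : E → E → E),
      emProd (emDiff dil a B) (dil c) = emDiff dil (a * c) (emProd B (dil c)) ∧
      ∀ e x : E,
        emDiff dil a B e (dil c e x) =
          emProd B (dil c) (dil (a * c) e x) (dil (a * c)⁻¹ (dil (a * c) e x) e) :=
  fun a c B => ⟨emProd_emDiff_dil hact a c B, emDiff_apply_dil hact a c B⟩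

theorem stmt_18 (N E : Type*) [CommGroup N] (dil : N → E → E → E)
    (hid : ∀ e x : E, dil 1 e x = x)
    (hact : ∀ (a b : N) (e x : E), dil a e (dil b e x) = dil (a * b) e x)
    (hR1 : ∀ (a : N) (x : E), dil a x x = x) :
    ∀ (a c : N) (B : E → E → E),
      emProd (emDiff dil a B) (dil c) = emDiff dil (a * c) (emProd B (dil c)) ∧
      ∀ e x : E,
        emDiff dil a B e (dil c e x) =
          emProd B (dil c) (dil (a * c) e x) (dil (a * c)⁻¹ (dil (a * c) e x) e) :=
  stmt_18_general N E dil hact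
end

section
/- Let N be a commutative group and E a type, let dil : N → E → E → E be a dilation structure which is injective as a map from N to binary operations on E (if dil a = dil b then a = b), and suppose ⋄ : N → N → N → N satisfies the (convex) axiom: for all c, a, b ∈ N, dil (⋄ c a b) = c^a (dil b) as binary operations on E, where c^a B := a − ((a − B)·(dil c)). Then ⋄ itself satisfies the dilation-calculus axioms on N: for all a, b, c, c' ∈ N, (id) ⋄ 1 a b = b; (act) ⋄ c a (⋄ c' a b) = ⋄ (c*c') a b; (R1) ⋄ c a a = a; and (R2) ⋄ c a (⋄ c⁻¹ a b) = b. -/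
/-- `c^a B := a − ((a − B)·(dil c))`. -/
def emCPow {N E : Type*} [CommGroup N] (dil : N → E → E → E) (c a : N)
    (B : E → E → E) : E → E → E :=
  emDiff dil a (emProd (emDiff dil a B) (dil c))

/-! Because `a − ·` is an involution, `c ↦ c^a` is an action of `N` on binary operations of `E`,
and it fixes `dil a`. By `hconv` the injective map `dil` intertwines `conv · a` with this
action, so the axioms for `conv` are pulled back from it. -/

section

variable {N E : Type*} [CommGroup N] {dil : N → E → E → E}

lemma dil_apply_dil_inv
    (hid : ∀ e x : E, dil 1 e x = x)
    (hact : ∀ (a b : N) (e x : E), dil a e (dil b e x) = dil (a * b) e x)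
    (a : N) (y e : E) : dil a y (dil a⁻¹ y e) = e := by
  rw [hact, mul_inv_cancel, hid]

lemma emDiff_emDiff
    (hid : ∀ e x : E, dil 1 e x = x)
    (hact : ∀ (a b : N) (e x : E), dil a e (dil b e x) = dil (a * b) e x)
    (a : N) (B : E → E → E) : emDiff dil a (emDiff dil a B) = B := by
  funext e x
  simp only [emDiff]
  rw [dil_apply_dil_inv hid hact, hact, inv_mul_cancel, hid]

lemma emProd_dil_one (hid : ∀ e x : E, dil 1 e x = x) (B : E → E → E) :
    emProd B (dil 1) = B := by
  funext e x
  simp only [emProd, hid]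

lemma emProd_emProd_dil
    (hact : ∀ (a b : N) (e x : E), dil a e (dil b e x) = dil (a * b) e x)
    (c c' : N) (B : E → E → E) :
    emProd (emProd B (dil c')) (dil c) = emProd B (dil (c * c')) := by
  funext e x
  simp only [emProd]
  rw [hact, mul_comm c' c]

lemma emCPow_one (hid : ∀ e x : E, dil 1 e x = x)
    (hact : ∀ (a b : N) (e x : E), dil a e (dil b e x) = dil (a * b) e x)
    (a : N) (B : E → E → E) : emCPow dil 1 a B = B := by
  rw [emCPow, emProd_dil_one hid, emDiff_emDiff hid hact]

lemma emCPow_emCPow (hid : ∀ e x : E, dil 1 e x = x)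
    (hact : ∀ (a b : N) (e x : E), dil a e (dil b e x) = dil (a * b) e x)
    (c c' a : N) (B : E → E → E) :
    emCPow dil c a (emCPow dil c' a B) = emCPow dil (c * c') a B := by
  simp only [emCPow]
  rw [emDiff_emDiff hid hact, emProd_emProd_dil hact]

lemma emCPow_dil_self (hid : ∀ e x : E, dil 1 e x = x)
    (hact : ∀ (a b : N) (e x : E), dil a e (dil b e x) = dil (a * b) e x)
    (c a : N) : emCPow dil c a (dil a) = dil a := by
  funext e x
  simp only [emCPow, emProd, emDiff]
  rw [dil_apply_dil_inv hid hact]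

end

theorem stmt_19_general (N E : Type*) [CommGroup N] (dil : N → E → E → E)
    (hid : ∀ e x : E, dil 1 e x = x)
    (hact : ∀ (a b : N) (e x : E), dil a e (dil b e x) = dil (a * b) e x)
    (hext : ∀ a b : N, dil a = dil b → a = b)
    (conv : N → N → N → N)
    (hconv : ∀ c a b : N, dil (conv c a b) = emCPow dil c a (dil b)) :
    ∀ a b c c' : N,
      conv 1 a b = b ∧
      conv c a (conv c' a b) = conv (c * c') a b ∧
      conv c a a = a ∧
      conv c a (conv c⁻¹ a b) = b := by
  have conv_one : ∀ a b : N, conv 1 a b = b := fun a b =>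
    hext _ _ (by rw [hconv, emCPow_one hid hact])
  have conv_conv : ∀ a b c c' : N, conv c a (conv c' a b) = conv (c * c') a b :=
    fun a b c c' => hext _ _ (by rw [hconv, hconv, hconv, emCPow_emCPow hid hact])
  intro a b c c'
  refine ⟨conv_one a b, conv_conv a b c c', ?_, ?_⟩
  · exact hext _ _ (by rw [hconv, emCPow_dil_self hid hact])
  · rw [conv_conv, mul_inv_cancel, conv_one]

theorem stmt_19 (N E : Type*) [CommGroup N] (dil : N → E → E → E)
    (hid : ∀ e x : E, dil 1 e x = x)
    (hact : ∀ (a b : N) (e x : E), dil a e (dil b e x) = dil (a * b) e x)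
    (hR1 : ∀ (a : N) (x : E), dil a x x = x)
    (hext : ∀ a b : N, dil a = dil b → a = b)
    (conv : N → N → N → N)
    (hconv : ∀ c a b : N, dil (conv c a b) = emCPow dil c a (dil b)) :
    ∀ a b c c' : N,
      conv 1 a b = b ∧
      conv c a (conv c' a b) = conv (c * c') a b ∧
      conv c a a = a ∧
      conv c a (conv c⁻¹ a b) = b :=
  stmt_19_general N E dil hid hact hext conv hconv
end
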